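/- arXiv:2204.08629 — 3 statements merged into one kernel-verified Lean document; each statement's English description precedes it below -/
import Mathlib

section
/- For a complex m×n matrix A with singular values σ_1 ≥ σ_2 ≥ ... ≥ σ_{min(m,n)}, and for any r ≤ min(m,n) and any matrices P ∈ C^{r×m}, Q ∈ C^{r×n} with P Pᴴ = I_r and Q Qᴴ = I_r, the trace satisfies |trace(P A Qᴴ)| ≤ σ_1 + ... + σ_r. -/
/-!
Diagonalizing `Aᴴ A` by a unitary `W` gives `A W = V Σ` with `Σ = diagonal (√λ)` and `V` a
partial isometry. Then `tr (P A Qᴴ) = ∑ⱼ √λⱼ ⟪(Q W)ⱼ, (P V)ⱼ⟫` over columns, and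
`‖⟪x, y⟫‖ ≤ (‖x‖² + ‖y‖²) / 2` bounds it by `∑ⱼ √λⱼ tⱼ`. The weights satisfy `0 ≤ tⱼ ≤ 1`,
since multiplying by a partial isometry does not increase column norms, and `∑ⱼ tⱼ ≤ r`, since
the `r` rows of `Q W` and `P V` have norm at most one. For decreasing nonnegative `σ`, a weighted
sum with such weights is at most `σ₁ + ⋯ + σᵣ`.
-/

open Matrix
open scoped ComplexOrder

namespace Matrix

variable {𝕜 : Type*} [RCLike 𝕜] {l m n : Type*}

lemma re_conjTranspose_mul_self_apply [Fintype m] (M : Matrix m n 𝕜) (j : n) :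
    RCLike.re ((Mᴴ * M) j j) = ∑ i, ‖M i j‖ ^ 2 := by
  simp only [mul_apply, conjTranspose_apply, RCLike.star_def, RCLike.conj_mul, map_sum,
    ← RCLike.ofReal_pow, RCLike.ofReal_re]

def IsPartialIsometry [Fintype m] [Fintype n] (M : Matrix m n 𝕜) : Prop :=
  M * Mᴴ * M = M

lemma IsPartialIsometry.conjTranspose [Fintype m] [Fintype n] {M : Matrix m n 𝕜}
    (hM : M.IsPartialIsometry) : Mᴴ.IsPartialIsometry := by
  simpa only [IsPartialIsometry, conjTranspose_mul, conjTranspose_conjTranspose,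
    Matrix.mul_assoc] using congrArg Matrix.conjTranspose hM

lemma isPartialIsometry_of_mul_conjTranspose_eq_one [Fintype m] [Fintype n] [DecidableEq m]
    {M : Matrix m n 𝕜} (hM : M * Mᴴ = 1) : M.IsPartialIsometry := by
  rw [IsPartialIsometry, hM, Matrix.one_mul]

/-- Since `1 - Xᴴ * X` is a Hermitian idempotent,
`Yᴴ * Y = (X * Y)ᴴ * (X * Y) + ((1 - Xᴴ * X) * Y)ᴴ * ((1 - Xᴴ * X) * Y)`. -/
lemma IsPartialIsometry.sum_norm_sq_mul_apply_le [Fintype l] [Fintype m] [DecidableEq m]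
    {X : Matrix l m 𝕜} (hX : X.IsPartialIsometry) (Y : Matrix m n 𝕜) (j : n) :
    ∑ i, ‖(X * Y) i j‖ ^ 2 ≤ ∑ i, ‖Y i j‖ ^ 2 := by
  set Z := (1 - Xᴴ * X) * Y
  have hXXX : ∀ N : Matrix m n 𝕜, X * (Xᴴ * (X * N)) = X * N := fun N => by
    rw [← Matrix.mul_assoc, ← Matrix.mul_assoc, hX]
  have hdecomp : Yᴴ * Y = (X * Y)ᴴ * (X * Y) + Zᴴ * Z := by
    simp only [Z, conjTranspose_mul, conjTranspose_sub, conjTranspose_conjTranspose,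
      Matrix.mul_sub, Matrix.sub_mul, Matrix.one_mul, Matrix.mul_assoc, hXXX]
    abel
  have hre := congrArg (fun M => RCLike.re (M j j)) hdecomp
  simp only [add_apply, map_add, re_conjTranspose_mul_self_apply] at hre
  have hZ : 0 ≤ ∑ i, ‖Z i j‖ ^ 2 := by positivity
  linarith

lemma IsPartialIsometry.sum_norm_sq_mul_apply_le' [Fintype m] [Fintype n] [DecidableEq m]
    {X : Matrix m n 𝕜} (hX : X.IsPartialIsometry) (Y : Matrix l m 𝕜) (i : l) :
    ∑ j, ‖(Y * X) i j‖ ^ 2 ≤ ∑ j, ‖Y i j‖ ^ 2 := by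
  simpa [← conjTranspose_mul] using hX.conjTranspose.sum_norm_sq_mul_apply_le Yᴴ i

lemma IsPartialIsometry.sum_norm_sq_apply_le_one [Fintype m] [Fintype n] [DecidableEq n]
    {M : Matrix m n 𝕜} (hM : M.IsPartialIsometry) (j : n) : ∑ i, ‖M i j‖ ^ 2 ≤ 1 := by
  simpa [one_apply, apply_ite] using hM.sum_norm_sq_mul_apply_le 1 j

lemma sum_norm_sq_apply_eq_one_of_mul_conjTranspose_eq_one [Fintype n] [DecidableEq m]
    {M : Matrix m n 𝕜} (hM : M * Mᴴ = 1) (i : m) : ∑ j, ‖M i j‖ ^ 2 = 1 := by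
  simpa [hM, eq_comm] using re_conjTranspose_mul_self_apply Mᴴ i

lemma sum_norm_sq_mul_apply_le_one [Fintype l] [Fintype m] [Fintype n] [DecidableEq l]
    [DecidableEq m] [DecidableEq n] {X : Matrix l m 𝕜} (hX : X * Xᴴ = 1) {Y : Matrix m n 𝕜}
    (hY : Y.IsPartialIsometry) (j : n) :
    ∑ i, ‖(X * Y) i j‖ ^ 2 ≤ 1 :=
  ((isPartialIsometry_of_mul_conjTranspose_eq_one hX).sum_norm_sq_mul_apply_le Y j).trans
    (hY.sum_norm_sq_apply_le_one j)

lemma sum_sum_norm_sq_mul_le_card [Fintype l] [Fintype m] [Fintype n] [DecidableEq l]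
    [DecidableEq m] {X : Matrix l m 𝕜} (hX : X * Xᴴ = 1) {Y : Matrix m n 𝕜}
    (hY : Y.IsPartialIsometry) :
    ∑ j, ∑ i, ‖(X * Y) i j‖ ^ 2 ≤ Fintype.card l := by
  rw [Finset.sum_comm]
  calc ∑ i, ∑ j, ‖(X * Y) i j‖ ^ 2 ≤ ∑ i : l, (1 : ℝ) := Finset.sum_le_sum fun i _ =>
        (hY.sum_norm_sq_mul_apply_le' X i).trans_eq
          (sum_norm_sq_apply_eq_one_of_mul_conjTranspose_eq_one hX i)
    _ = Fintype.card l := by simp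

lemma norm_conjTranspose_mul_apply_self_le [Fintype m] (X Y : Matrix m n 𝕜) (j : n) :
    ‖(Xᴴ * Y) j j‖ ≤ (∑ i, ‖X i j‖ ^ 2 + ∑ i, ‖Y i j‖ ^ 2) / 2 := by
  rw [mul_apply, ← Finset.sum_add_distrib, Finset.sum_div]
  refine (norm_sum_le _ _).trans (Finset.sum_le_sum fun i _ => ?_)
  rw [norm_mul, conjTranspose_apply, norm_star]
  linarith [two_mul_le_add_sq ‖X i j‖ ‖Y i j‖]

lemma norm_trace_conjTranspose_mul_mul_diagonal_le [Fintype m] [Fintype n] [DecidableEq n]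
    (X Y : Matrix m n 𝕜) {s : n → ℝ} (hs : ∀ j, 0 ≤ s j) :
    ‖(Xᴴ * Y * diagonal fun j => (s j : 𝕜)).trace‖ ≤
      ∑ j, s j * ((∑ i, ‖X i j‖ ^ 2 + ∑ i, ‖Y i j‖ ^ 2) / 2) := by
  simp only [trace, diag, mul_diagonal]
  refine (norm_sum_le _ _).trans (Finset.sum_le_sum fun j _ => ?_)
  rw [norm_mul, RCLike.norm_ofReal, abs_of_nonneg (hs j), mul_comm]
  exact mul_le_mul_of_nonneg_left (norm_conjTranspose_mul_apply_self_le X Y j) (hs j)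

/-- `V` is `B` with its nonzero columns normalized; `(√0)⁻¹ = 0` keeps the zero columns. -/
lemma exists_isPartialIsometry_mul_diagonal_sqrt [Fintype m] [Fintype n] [DecidableEq n]
    {B : Matrix m n 𝕜} {d : n → ℝ} (hB : Bᴴ * B = diagonal fun j => (d j : 𝕜)) :
    ∃ V : Matrix m n 𝕜, V.IsPartialIsometry ∧ B = V * diagonal fun j => (√(d j) : 𝕜) := by
  set G : Matrix n n 𝕜 := diagonal fun j => ((√(d j))⁻¹ : ℝ)
  have hG : Gᴴ = G := by
    simp only [G, diagonal_conjTranspose]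
    congr 1; ext j; simp
  refine ⟨B * G, ?_, ?_⟩
  · have hg (x : ℝ) : (√x)⁻¹ * ((√x)⁻¹ * (x * (√x)⁻¹)) = (√x)⁻¹ := by
      rcases le_or_gt x 0 with hx | hx
      · simp [Real.sqrt_eq_zero'.2 hx]
      · have := Real.sqrt_pos.2 hx
        field_simp
        rw [Real.sq_sqrt hx.le]
    rw [IsPartialIsometry, conjTranspose_mul, hG]
    simp only [Matrix.mul_assoc]
    rw [← Matrix.mul_assoc Bᴴ, hB]
    simp only [G, diagonal_mul_diagonal, ← RCLike.ofReal_mul, hg]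
  · ext i j
    have hcol : ∑ k, ‖B k j‖ ^ 2 = d j := by
      simpa [hB] using (re_conjTranspose_mul_self_apply B j).symm
    simp only [G, mul_diagonal, mul_assoc, ← RCLike.ofReal_mul]
    rcases le_or_gt (d j) 0 with hd | hd
    · have hle : ‖B i j‖ ^ 2 ≤ ∑ k, ‖B k j‖ ^ 2 :=
        Finset.single_le_sum (f := fun k => ‖B k j‖ ^ 2) (fun k _ => by positivity)
          (Finset.mem_univ i)
      have hBij : B i j = 0 :=
        norm_eq_zero.1 <| (pow_eq_zero_iff two_ne_zero).1 <| le_antisymm (by linarith)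
          (by positivity)
      simp [hBij]
    · rw [inv_mul_cancel₀ (Real.sqrt_pos.2 hd).ne', RCLike.ofReal_one, mul_one]

lemma exists_singular_value_decomposition [Fintype m] [Fintype n] [DecidableEq n]
    (A : Matrix m n 𝕜) :
    ∃ (W : Matrix n n 𝕜) (V : Matrix m n 𝕜), W * Wᴴ = 1 ∧ V.IsPartialIsometry ∧
      A * W = V * diagonal fun j =>
        (√((posSemidef_conjTranspose_mul_self A).isHermitian.eigenvalues j) : 𝕜) := by
  set hA := (posSemidef_conjTranspose_mul_self A).isHermitian
  set W : Matrix n n 𝕜 := (hA.eigenvectorUnitary : Matrix n n 𝕜)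
  have hW : W * Wᴴ = 1 := Unitary.mul_star_self_of_mem hA.eigenvectorUnitary.2
  have hdiag : (A * W)ᴴ * (A * W) = diagonal fun j => (hA.eigenvalues j : 𝕜) := by
    have := hA.conjStarAlgAut_star_eigenvectorUnitary
    rw [Unitary.conjStarAlgAut_star_apply] at this
    rw [conjTranspose_mul, Matrix.mul_assoc, ← Matrix.mul_assoc Aᴴ, ← Matrix.mul_assoc]
    exact this
  obtain ⟨V, hV, hAW⟩ := exists_isPartialIsometry_mul_diagonal_sqrt hdiag
  exact ⟨W, V, hW, hV, hAW⟩

end Matrix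

section Rearrangement

open Finset

lemma sum_mul_le_sum_of_threshold {ι : Type*} [Fintype ι] (S : Finset ι) {σ u : ι → ℝ} {c : ℝ}
    (hc : 0 ≤ c) (hS : ∀ i ∈ S, c ≤ σ i) (hSc : ∀ i ∉ S, σ i ≤ c)
    (hu : ∀ i, u i ∈ Set.Icc 0 1) (hsum : ∑ i, u i ≤ #S) :
    ∑ i, σ i * u i ≤ ∑ i ∈ S, σ i := by
  classical
  -- termwise, `(σ i - c) * (u i - [i ∈ S]) ≤ 0`
  have hterm : ∀ i, σ i * u i - (if i ∈ S then σ i else 0) ≤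
      c * u i - (if i ∈ S then c else 0) := by
    intro i
    obtain ⟨hu0, hu1⟩ := hu i
    split_ifs with hi
    · nlinarith [hS i hi]
    · nlinarith [hSc i hi]
  have hsum_le := sum_le_sum fun i (_ : i ∈ univ) => hterm i
  simp only [sum_sub_distrib, ← mul_sum, sum_ite_mem, univ_inter, sum_const, nsmul_eq_mul]
    at hsum_le
  nlinarith

lemma sum_mul_le_sum_castLE_of_antitone {n r : ℕ} (hr : r ≤ n) {σ u : Fin n → ℝ}
    (hσ : Antitone σ) (hσ0 : ∀ i, 0 ≤ σ i) (hu : ∀ i, u i ∈ Set.Icc 0 1)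
    (hsum : ∑ i, u i ≤ r) :
    ∑ i, σ i * u i ≤ ∑ i : Fin r, σ (Fin.castLE hr i) := by
  rcases Nat.eq_zero_or_pos n with rfl | hn
  · obtain rfl : r = 0 := Nat.le_zero.mp hr
    simp
  have hmem : ∀ i : Fin n, i ∈ univ.map (Fin.castLEEmb hr) ↔ (i : ℕ) < r := fun i =>
    ⟨fun h => by obtain ⟨j, -, rfl⟩ := mem_map.1 h; exact j.2,
      fun h => mem_map.2 ⟨⟨i, h⟩, mem_univ _, rfl⟩⟩
  rw [← Fin.coe_castLEEmb hr, ← sum_map univ]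
  -- for `r = 0` the truncated `r - 1` makes the threshold `σ 0 = max σ`
  refine sum_mul_le_sum_of_threshold _ (hσ0 ⟨r - 1, by omega⟩) (fun i hi => hσ ?_)
    (fun i hi => hσ ?_) hu (by simpa using hsum)
  · rw [hmem] at hi; rw [Fin.le_def]; simp only; omega
  · rw [hmem] at hi; rw [Fin.le_def]; simp only; omega

end Rearrangement

theorem truncated_trace_inequality {m n r : ℕ} (A : Matrix (Fin m) (Fin n) ℂ)
    (σ : Fin n → ℝ) (hσ : Antitone σ)
    (hsv : ∃ e : Equiv.Perm (Fin n), ∀ i,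
      σ i = Real.sqrt
        ((Matrix.posSemidef_conjTranspose_mul_self A).isHermitian.eigenvalues (e i)))
    (hr : r ≤ min m n)
    (P : Matrix (Fin r) (Fin m) ℂ) (Q : Matrix (Fin r) (Fin n) ℂ)
    (hP : P * Pᴴ = 1) (hQ : Q * Qᴴ = 1) :
    ‖(P * A * Qᴴ).trace‖ ≤
      ∑ i : Fin r, σ (Fin.castLE (hr.trans (min_le_right m n)) i) := by
  obtain ⟨e, he⟩ := hsv
  obtain ⟨W, V, hW, hV, hAW⟩ := exists_singular_value_decomposition A
  set s : Fin n → ℝ := fun j =>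
    √((Matrix.posSemidef_conjTranspose_mul_self A).isHermitian.eigenvalues j)
  set t : Fin n → ℝ := fun j => (∑ i, ‖(Q * W) i j‖ ^ 2 + ∑ i, ‖(P * V) i j‖ ^ 2) / 2
  have htrace : (P * A * Qᴴ).trace = ((Q * W)ᴴ * (P * (A * W))).trace := by
    calc (P * A * Qᴴ).trace = (Qᴴ * (P * A) * (W * Wᴴ)).trace := by
          rw [hW, Matrix.mul_one, trace_mul_comm]
      _ = _ := by
          rw [← Matrix.mul_assoc, trace_mul_comm]
          simp only [conjTranspose_mul, Matrix.mul_assoc]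
  have hWiso := isPartialIsometry_of_mul_conjTranspose_eq_one hW
  have ht : ∀ j, t j ∈ Set.Icc 0 1 := fun j => by
    have := sum_norm_sq_mul_apply_le_one hQ hWiso j
    have := sum_norm_sq_mul_apply_le_one hP hV j
    exact ⟨by positivity, by simp only [t]; linarith⟩
  have ht_sum : ∑ j, t j ≤ r := by
    have hQW := sum_sum_norm_sq_mul_le_card hQ hWiso
    have hPV := sum_sum_norm_sq_mul_le_card hP hV
    simp only [Fintype.card_fin] at hQW hPV
    simp only [t, ← Finset.sum_div, Finset.sum_add_distrib]
    linarith
  calc ‖(P * A * Qᴴ).trace‖ ≤ ∑ j, s j * t j := by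
        rw [htrace, hAW, ← Matrix.mul_assoc P, ← Matrix.mul_assoc]
        exact norm_trace_conjTranspose_mul_mul_diagonal_le _ _ fun j => Real.sqrt_nonneg _
    _ = ∑ i, σ i * t (e i) := by
        rw [← Equiv.sum_comp e]; simp only [he, s]
    _ ≤ _ := sum_mul_le_sum_castLE_of_antitone _ hσ (fun i => he i ▸ Real.sqrt_nonneg _)
        (fun i => ht (e i)) (by rwa [Equiv.sum_comp e])
end

section
/- For a complex m×n matrix A of rank r' and any r ≤ min(m,n), the maximum of |trace(P A Qᴴ)| over matrices P ∈ C^{r×m}, Q ∈ C^{r×n} satisfying P Pᴴ = I_r and Q Qᴴ = I_r equals σ_1 + ... + σ_r, the sum of the r largest singular values of A; the maximum is attained by taking P and Q to be the conjugate transposes of the first r left and right singular vectors of A. -/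
/-!
With `X = P U` and `Y = Q V`, which again have orthonormal rows, `trace (P A Qᴴ)` becomes
`trace (X Σ Yᴴ) = ∑ k l, Σ k l * (Yᴴ X) l k`, and AM-GM bounds `|(Yᴴ X) l k|` by the mean of the
squared norms of column `k` of `X` and column `l` of `Y`. The squared column norms of a matrix
with `r` orthonormal rows lie in `[0, 1]` and sum to `r`, and against such weights a nonnegative
antitone sequence `σ` has weighted sum at most `σ 0 + ⋯ + σ (r - 1)`. The bound is attained by the
first `r` singular vectors, for which `P A Qᴴ` is the leading `r × r` block of `Σ`.
-/

open Matrix Finset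

theorem sum_mul_le_sum_range_of_antitone {ι : Type*} [Fintype ι] (e : ι ↪ ℕ) {σ : ℕ → ℝ}
    (hσ0 : ∀ k, 0 ≤ σ k) (hσ : Antitone σ) {w : ι → ℝ} (hw0 : ∀ i, 0 ≤ w i)
    (hw1 : ∀ i, w i ≤ 1) {r : ℕ} (hw : ∑ i, w i ≤ r) :
    ∑ i, σ (e i) * w i ≤ ∑ k ∈ range r, σ k := by
  -- measured from the level `σ r`, the term of `i` gains at most `g (e i)`, and the remaining
  -- `σ r * ∑ w` is at most `σ r * r`
  set g : ℕ → ℝ := fun k => if k < r then σ k - σ r else 0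
  have hg0 : ∀ k, 0 ≤ g k := fun k => by
    by_cases h : k < r
    · simpa [g, h] using hσ h.le
    · simp [g, h]
  have hterm : ∀ i, (σ (e i) - σ r) * w i ≤ g (e i) := fun i => by
    by_cases h : e i < r
    · simpa [g, h] using mul_le_of_le_one_right (sub_nonneg.2 (hσ h.le)) (hw1 i)
    · simpa [g, h] using mul_nonpos_of_nonpos_of_nonneg (sub_nonpos.2 (hσ (not_lt.1 h))) (hw0 i)
  have hg : ∑ i, g (e i) ≤ ∑ k ∈ range r, g k := by
    rw [← sum_map univ e g, ← sum_filter_of_ne (p := (· < r)) fun k _ hk => by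
      by_contra h; simp [g, h] at hk]
    exact sum_le_sum_of_subset_of_nonneg (fun k hk => by simpa using (mem_filter.1 hk).2)
      fun k _ _ => hg0 k
  calc ∑ i, σ (e i) * w i = ∑ i, (σ (e i) - σ r) * w i + σ r * ∑ i, w i := by
        rw [mul_sum, ← sum_add_distrib]; congr 1; ext i; ring
    _ ≤ ∑ k ∈ range r, g k + σ r * r :=
        add_le_add ((sum_le_sum fun i _ => hterm i).trans hg) (mul_le_mul_of_nonneg_left hw (hσ0 r))
    _ = ∑ k ∈ range r, σ k := by
        rw [sum_congr rfl fun k hk => if_pos (mem_range.1 hk), sum_sub_distrib, sum_const,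
          card_range, nsmul_eq_mul]
        ring

namespace Matrix

section RCLike

variable {𝕜 ι κ ν : Type*} [RCLike 𝕜]

theorem conjTranspose_mul_self_apply_self [Fintype ι] (X : Matrix ι κ 𝕜) (k : κ) :
    (Xᴴ * X) k k = ((∑ i, ‖X i k‖ ^ 2 : ℝ) : 𝕜) := by
  simp [mul_apply, RCLike.conj_mul]

theorem sum_norm_sq_apply_le_one [Fintype ι] [Fintype κ] [DecidableEq ι]
    {X : Matrix ι κ 𝕜} (hX : X * Xᴴ = 1) (k : κ) : ∑ i, ‖X i k‖ ^ 2 ≤ 1 := by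
  have hproj : (Xᴴ * X)ᴴ * (Xᴴ * X) = Xᴴ * X := by
    rw [conjTranspose_mul, conjTranspose_conjTranspose, Matrix.mul_assoc, ← Matrix.mul_assoc X,
      hX, Matrix.one_mul]
  -- a diagonal entry of the projection `Xᴴ * X` is the squared norm of its column,
  -- so it is at least its own square
  have hcol : ∑ i, ‖X i k‖ ^ 2 = ∑ l, ‖(Xᴴ * X) l k‖ ^ 2 := by
    apply RCLike.ofReal_injective (K := 𝕜)
    rw [← conjTranspose_mul_self_apply_self]
    conv_lhs => rw [← hproj]
    rw [conjTranspose_mul_self_apply_self]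
  have h0 : 0 ≤ ∑ i, ‖X i k‖ ^ 2 := sum_nonneg fun i _ => sq_nonneg _
  have hsq : (∑ i, ‖X i k‖ ^ 2) ^ 2 ≤ ∑ i, ‖X i k‖ ^ 2 := by
    calc (∑ i, ‖X i k‖ ^ 2) ^ 2 = ‖(Xᴴ * X) k k‖ ^ 2 := by
          rw [conjTranspose_mul_self_apply_self, RCLike.norm_ofReal, abs_of_nonneg h0]
      _ ≤ ∑ l, ‖(Xᴴ * X) l k‖ ^ 2 :=
          single_le_sum (f := fun l => ‖(Xᴴ * X) l k‖ ^ 2) (fun l _ => sq_nonneg _) (mem_univ k)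
      _ = ∑ i, ‖X i k‖ ^ 2 := hcol.symm
  nlinarith

theorem sum_sum_norm_sq_eq_card [Fintype ι] [Fintype κ] [DecidableEq ι]
    {X : Matrix ι κ 𝕜} (hX : X * Xᴴ = 1) : ∑ k, ∑ i, ‖X i k‖ ^ 2 = Fintype.card ι := by
  have h := congr_arg trace hX
  rw [trace_mul_comm, trace_one] at h
  simp only [trace, diag, conjTranspose_mul_self_apply_self] at h
  exact_mod_cast h

theorem norm_conjTranspose_mul_apply_le [Fintype ι] (X : Matrix ι κ 𝕜)
    (Y : Matrix ι ν 𝕜) (l : ν) (k : κ) :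
    ‖(Yᴴ * X) l k‖ ≤ (∑ i, ‖X i k‖ ^ 2 + ∑ i, ‖Y i l‖ ^ 2) / 2 := by
  calc ‖(Yᴴ * X) l k‖ ≤ ∑ i, ‖Y i l‖ * ‖X i k‖ := by
        simpa [mul_apply] using norm_sum_le univ fun i => star (Y i l) * X i k
    _ ≤ ∑ i, (‖X i k‖ ^ 2 + ‖Y i l‖ ^ 2) / 2 :=
        sum_le_sum fun i _ => by nlinarith [sq_nonneg (‖X i k‖ - ‖Y i l‖)]
    _ = _ := by rw [← sum_div, sum_add_distrib]

theorem norm_trace_mul_mul_conjTranspose_le [Fintype ι] [Fintype κ] [Fintype ν]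
    (X : Matrix ι κ 𝕜) (S : Matrix κ ν 𝕜) (Y : Matrix ι ν 𝕜) :
    ‖trace (X * S * Yᴴ)‖ ≤
      ∑ k, ∑ l, ‖S k l‖ * ((∑ i, ‖X i k‖ ^ 2 + ∑ i, ‖Y i l‖ ^ 2) / 2) := by
  rw [trace_mul_cycle, trace_mul_comm]
  calc ‖trace (S * (Yᴴ * X))‖ ≤ ∑ k, ∑ l, ‖S k l‖ * ‖(Yᴴ * X) l k‖ := by
        refine (norm_sum_le _ _).trans (sum_le_sum fun k _ => ?_)
        simpa [mul_apply] using norm_sum_le univ fun l => S k l * (Yᴴ * X) l k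
    _ ≤ _ := by
        gcongr with k _ l _
        exact norm_conjTranspose_mul_apply_le X Y l k

theorem norm_trace_mul_mul_conjTranspose_le_sum_of_antitone {r m n : ℕ}
    {X : Matrix (Fin r) (Fin m) 𝕜} {Y : Matrix (Fin r) (Fin n) 𝕜} (hX : X * Xᴴ = 1)
    (hY : Y * Yᴴ = 1) {S : Matrix (Fin m) (Fin n) 𝕜} {σ : ℕ → ℝ} (hσ0 : ∀ k, 0 ≤ σ k)
    (hσ : Antitone σ) (hrow : ∀ k, ∑ l, ‖S k l‖ ≤ σ k) (hcol : ∀ l, ∑ k, ‖S k l‖ ≤ σ l) :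
    ‖trace (X * S * Yᴴ)‖ ≤ ∑ i : Fin r, σ i := by
  have hXr : ∑ k, ∑ i, ‖X i k‖ ^ 2 ≤ r := by simp [sum_sum_norm_sq_eq_card hX]
  have hYr : ∑ l, ∑ i, ‖Y i l‖ ^ 2 ≤ r := by simp [sum_sum_norm_sq_eq_card hY]
  calc ‖trace (X * S * Yᴴ)‖
      ≤ ∑ k, ∑ l, ‖S k l‖ * ((∑ i, ‖X i k‖ ^ 2 + ∑ i, ‖Y i l‖ ^ 2) / 2) :=
        norm_trace_mul_mul_conjTranspose_le X S Y
    _ = ((∑ k, (∑ l, ‖S k l‖) * ∑ i, ‖X i k‖ ^ 2) +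
          ∑ l, (∑ k, ‖S k l‖) * ∑ i, ‖Y i l‖ ^ 2) / 2 := by
        simp only [mul_add, add_div, sum_add_distrib, sum_div, sum_mul, mul_div_assoc]
        rw [sum_comm (s := univ) (t := univ) (f := fun k l => ‖S k l‖ * ∑ i, ‖Y i l‖ ^ 2 / 2)]
    _ ≤ ((∑ k : Fin m, σ k * ∑ i, ‖X i k‖ ^ 2) + ∑ l : Fin n, σ l * ∑ i, ‖Y i l‖ ^ 2) / 2 := by
        gcongr with k _ l _
        · exact hrow k
        · exact hcol l
    _ ≤ (∑ k ∈ range r, σ k + ∑ k ∈ range r, σ k) / 2 := by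
        gcongr
        · exact sum_mul_le_sum_range_of_antitone Fin.valEmbedding hσ0 hσ
            (fun k => sum_nonneg fun i _ => sq_nonneg _) (sum_norm_sq_apply_le_one hX) hXr
        · exact sum_mul_le_sum_range_of_antitone Fin.valEmbedding hσ0 hσ
            (fun l => sum_nonneg fun i _ => sq_nonneg _) (sum_norm_sq_apply_le_one hY) hYr
    _ = ∑ i : Fin r, σ i := by rw [Fin.sum_univ_eq_sum_range]; ring

end RCLike

section Submatrix

variable {α ι κ ρ : Type*}

theorem conjTranspose_submatrix_mul_conjTranspose_eq_one [NonAssocSemiring α] [StarRing α]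
    [Fintype ι] [DecidableEq κ] [DecidableEq ρ] {U : Matrix ι κ α} (hU : Uᴴ * U = 1)
    {e : ρ → κ} (he : Function.Injective e) :
    Uᴴ.submatrix e id * (Uᴴ.submatrix e id)ᴴ = 1 := by
  rw [conjTranspose_submatrix, conjTranspose_conjTranspose,
    ← submatrix_mul _ _ _ _ _ Function.bijective_id, hU, submatrix_one _ he]

theorem conjTranspose_submatrix_mul_mul_submatrix [Semiring α] [StarRing α] [Fintype ι] [Fintype κ]
    [DecidableEq ι] [DecidableEq κ] {U : Matrix ι ι α} {V : Matrix κ κ α}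
    (hU : Uᴴ * U = 1) (hV : Vᴴ * V = 1) (S : Matrix ι κ α) (e : ρ → ι) (f : ρ → κ) :
    Uᴴ.submatrix e id * (U * S * Vᴴ) * (Vᴴ.submatrix f id)ᴴ = S.submatrix e f := by
  rw [conjTranspose_submatrix, conjTranspose_conjTranspose, ← submatrix_id_id (U * S * Vᴴ),
    ← submatrix_mul _ _ _ _ _ Function.bijective_id,
    ← submatrix_mul _ _ _ _ _ Function.bijective_id]
  simp only [← Matrix.mul_assoc, hU, Matrix.one_mul]
  simp only [Matrix.mul_assoc, hV, Matrix.mul_one]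

end Submatrix

end Matrix

def rectDiagonal {m n : ℕ} (σ : ℕ → ℝ) : Matrix (Fin m) (Fin n) ℂ :=
  of fun i j => if (i : ℕ) = j then (σ i : ℂ) else 0

theorem sum_norm_rectDiagonal_row_le {m n : ℕ} {σ : ℕ → ℝ} (hσ0 : ∀ k, 0 ≤ σ k) (k : Fin m) :
    ∑ l : Fin n, ‖rectDiagonal σ k l‖ ≤ σ k := by
  simp only [rectDiagonal, of_apply, apply_ite norm, norm_zero, Complex.norm_real,
    Real.norm_of_nonneg (hσ0 _)]
  rw [Fin.sum_univ_eq_sum_range (fun j => if (k : ℕ) = j then σ k else 0), sum_ite_eq]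
  split_ifs <;> simp [hσ0]

theorem sum_norm_rectDiagonal_col_le {m n : ℕ} {σ : ℕ → ℝ} (hσ0 : ∀ k, 0 ≤ σ k) (l : Fin n) :
    ∑ k : Fin m, ‖rectDiagonal σ k l‖ ≤ σ l := by
  simp only [rectDiagonal, of_apply, apply_ite norm, norm_zero, Complex.norm_real,
    Real.norm_of_nonneg (hσ0 _)]
  rw [Fin.sum_univ_eq_sum_range (fun j => if j = (l : ℕ) then σ j else 0), sum_ite_eq']
  split_ifs <;> simp [hσ0]

theorem trace_rectDiagonal_submatrix_castLE {m n r : ℕ} (σ : ℕ → ℝ) (hm : r ≤ m) (hn : r ≤ n) :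
    ((rectDiagonal σ).submatrix (Fin.castLE hm) (Fin.castLE hn)).trace =
      ∑ i : Fin r, (σ i : ℂ) := by
  simp [trace, rectDiagonal]

theorem truncated_trace_max_attained {m n r : ℕ}
    (A : Matrix (Fin m) (Fin n) ℂ)
    (U : Matrix (Fin m) (Fin m) ℂ) (V : Matrix (Fin n) (Fin n) ℂ) (σ : ℕ → ℝ)
    (hU : Uᴴ * U = 1 ∧ U * Uᴴ = 1)
    (hV : Vᴴ * V = 1 ∧ V * Vᴴ = 1)
    (hσ0 : ∀ k, 0 ≤ σ k) (hσa : Antitone σ)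
    (hA : A = U * Matrix.of (fun (i : Fin m) (j : Fin n) =>
      if (i : ℕ) = (j : ℕ) then (σ (i : ℕ) : ℂ) else 0) * Vᴴ)
    (hr : r ≤ min m n) :
    IsGreatest
      {t : ℝ | ∃ (P : Matrix (Fin r) (Fin m) ℂ) (Q : Matrix (Fin r) (Fin n) ℂ),
        P * Pᴴ = 1 ∧ Q * Qᴴ = 1 ∧ t = ‖(P * A * Qᴴ).trace‖}
      (∑ i : Fin r, σ (i : ℕ)) ∧
    ‖
      ((Matrix.of (fun (i : Fin r) (k : Fin m) =>
          starRingEnd ℂ (U k (Fin.castLE (hr.trans (min_le_left m n)) i))) * A *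
        (Matrix.of (fun (i : Fin r) (k : Fin n) =>
          starRingEnd ℂ (V k (Fin.castLE (hr.trans (min_le_right m n)) i))))ᴴ).trace)‖ =
      ∑ i : Fin r, σ (i : ℕ) := by
  change A = U * rectDiagonal σ * Vᴴ at hA
  have hm : r ≤ m := hr.trans (min_le_left m n)
  have hn : r ≤ n := hr.trans (min_le_right m n)
  have hmax : ‖(Uᴴ.submatrix (Fin.castLE hm) id * A * (Vᴴ.submatrix (Fin.castLE hn) id)ᴴ).trace‖ =
      ∑ i : Fin r, σ i := by
    rw [hA, conjTranspose_submatrix_mul_mul_submatrix hU.1 hV.1,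
      trace_rectDiagonal_submatrix_castLE, ← Complex.ofReal_sum, Complex.norm_real,
      Real.norm_of_nonneg (sum_nonneg fun i _ => hσ0 _)]
  refine ⟨⟨⟨_, _,
    conjTranspose_submatrix_mul_conjTranspose_eq_one hU.1 (Fin.castLE_injective hm),
    conjTranspose_submatrix_mul_conjTranspose_eq_one hV.1 (Fin.castLE_injective hn),
    hmax.symm⟩, ?_⟩, hmax⟩
  rintro _ ⟨P, Q, hP, hQ, rfl⟩
  have hPU : (P * U) * (P * U)ᴴ = 1 := by
    rw [conjTranspose_mul, Matrix.mul_assoc, ← Matrix.mul_assoc U, hU.2, Matrix.one_mul, hP]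
  have hQV : (Q * V) * (Q * V)ᴴ = 1 := by
    rw [conjTranspose_mul, Matrix.mul_assoc, ← Matrix.mul_assoc V, hV.2, Matrix.one_mul, hQ]
  have hPAQ : P * A * Qᴴ = P * U * (rectDiagonal σ : Matrix (Fin m) (Fin n) ℂ) * (Q * V)ᴴ := by
    simp only [hA, conjTranspose_mul, Matrix.mul_assoc]
  rw [hPAQ]
  exact norm_trace_mul_mul_conjTranspose_le_sum_of_antitone hPU hQV hσ0 hσa
    (sum_norm_rectDiagonal_row_le hσ0) (sum_norm_rectDiagonal_col_le hσ0)
end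

section
/- For any complex m×n matrix A and any integer r with 0 ≤ r ≤ min(m,n), the truncated nuclear norm ‖A‖_r := Σ_{i=r+1}^{min(m,n)} σ_i(A) equals ‖A‖_* − max{|trace(P A Qᴴ)| : P Pᴴ = I_r, Q Qᴴ = I_r}, where ‖A‖_* is the nuclear norm (sum of all singular values). -/
/-!
Write `B = P U` and `C = Q V`; both have orthonormal rows and
`trace (P A Qᴴ) = ∑ₗ σₗ ⟨bₗ, cₗ⟩` over their columns. Columns of a matrix with `r` orthonormal
rows have squared norms in `[0, 1]` summing to `r`, so bounding `|⟨bₗ, cₗ⟩|` by the mean of the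
squared norms and comparing with the `r` largest terms of the antitone `σ` gives
`|trace (P A Qᴴ)| ≤ σ₁ + ⋯ + σᵣ`. The first `r` rows of `Uᴴ` and `Vᴴ` attain this.
-/

open Matrix

open Finset in
theorem Antitone.sum_range_mul_le_sum_range {σ w : ℕ → ℝ} {N r : ℕ} (hσ : Antitone σ)
    (hσ0 : ∀ k, 0 ≤ σ k) (hr : r ≤ N) (hw0 : ∀ l, 0 ≤ w l) (hw1 : ∀ l, w l ≤ 1)
    (hw : ∑ l ∈ range N, w l ≤ r) :
    ∑ l ∈ range N, σ l * w l ≤ ∑ l ∈ range r, σ l := by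
  -- Compare every term with `σ r`: weight below `r` is worth at least `σ r`, weight above at most.
  have head : ∑ l ∈ range r, (σ l * w l - σ l) ≤ ∑ l ∈ range r, σ r * (w l - 1) :=
    sum_le_sum fun l hl => by
      rw [← mul_sub_one]
      exact mul_le_mul_of_nonpos_right (hσ (mem_range.1 hl).le) (by linarith [hw1 l])
  have tail : ∑ l ∈ Ico r N, σ l * w l ≤ ∑ l ∈ Ico r N, σ r * w l :=
    sum_le_sum fun l hl => mul_le_mul_of_nonneg_right (hσ (mem_Ico.1 hl).1) (hw0 l)
  have total : ∑ l ∈ range r, σ r * (w l - 1) + ∑ l ∈ Ico r N, σ r * w l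
      = σ r * (∑ l ∈ range N, w l - r) := by
    rw [← sum_range_add_sum_Ico w hr, ← mul_sum, ← mul_sum, sum_sub_distrib]
    simp only [sum_const, card_range, nsmul_eq_mul, mul_one]
    ring
  have hnonpos : σ r * (∑ l ∈ range N, w l - r) ≤ 0 :=
    mul_nonpos_of_nonneg_of_nonpos (hσ0 r) (by linarith)
  rw [sum_sub_distrib] at head
  rw [← sum_range_add_sum_Ico _ hr]
  linarith

section OrthonormalRows

variable {𝕜 ι κ : Type*} [RCLike 𝕜] [Fintype κ] {B : Matrix ι κ 𝕜}

theorem Matrix.mul_conjTranspose_apply_self (B : Matrix ι κ 𝕜) (i : ι) :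
    (B * Bᴴ) i i = ((∑ j, ‖B i j‖ ^ 2 : ℝ) : 𝕜) := by
  simp [mul_apply, RCLike.mul_conj]

variable [DecidableEq ι]

theorem Matrix.sum_norm_sq_row_eq_one (hB : B * Bᴴ = 1) (i : ι) : ∑ j, ‖B i j‖ ^ 2 = 1 := by
  have h := B.mul_conjTranspose_apply_self i
  rw [hB, one_apply_eq] at h
  exact_mod_cast h.symm

theorem Matrix.sum_sum_norm_sq_eq_card_s13 [Fintype ι] (hB : B * Bᴴ = 1) :
    ∑ j, ∑ i, ‖B i j‖ ^ 2 = Fintype.card ι := by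
  simp [Finset.sum_comm (γ := κ), sum_norm_sq_row_eq_one hB]

theorem Matrix.sum_norm_sq_col_le_one [Fintype ι] [DecidableEq κ] (hB : B * Bᴴ = 1) (j : κ) :
    ∑ i, ‖B i j‖ ^ 2 ≤ 1 := by
  -- `G = Bᴴ B` is a Hermitian idempotent, so `G j j = (G Gᴴ) j j = ∑ k, ‖G j k‖² ≥ ‖G j j‖²`.
  set c := ∑ i, ‖B i j‖ ^ 2
  set G := Bᴴ * B
  have hGjj : G j j = (c : 𝕜) := by
    simpa only [conjTranspose_conjTranspose, conjTranspose_apply, norm_star] using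
      Bᴴ.mul_conjTranspose_apply_self j
  have hGG : G * Gᴴ = G := by
    rw [conjTranspose_mul, conjTranspose_conjTranspose, Matrix.mul_assoc, ← Matrix.mul_assoc B,
      hB, Matrix.one_mul]
  have hc : c = ∑ k, ‖G j k‖ ^ 2 := by
    have h := G.mul_conjTranspose_apply_self j
    rw [hGG, hGjj] at h
    exact_mod_cast h
  have hsq : c ^ 2 ≤ c := by
    have h := Finset.single_le_sum (fun k _ => sq_nonneg ‖G j k‖) (Finset.mem_univ j)
    rwa [← hc, hGjj, RCLike.norm_ofReal, sq_abs] at h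
  have hc0 : 0 ≤ c := by positivity
  nlinarith

end OrthonormalRows

section RectDiag

variable {α ι : Type*} {m n : ℕ}

def Matrix.rectDiag [Zero α] (d : ℕ → α) : Matrix (Fin m) (Fin n) α :=
  of fun i j => if (i : ℕ) = j then d i else 0

-- Columns indexed by `ℕ`, zero from `m` on, so that matrices of any width pair with one `σ`.
def Matrix.padCols [Zero α] (B : Matrix ι (Fin m) α) : Matrix ι ℕ α :=
  of fun i l => if h : l < m then B i ⟨l, h⟩ else 0

@[simp]
theorem Matrix.padCols_apply_fin [Zero α] (B : Matrix ι (Fin m) α) (i : ι) (j : Fin m) :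
    B.padCols i j = B i j := by
  simp [padCols]

theorem Matrix.mul_rectDiag_apply [NonUnitalNonAssocSemiring α] (B : Matrix ι (Fin m) α)
    (d : ℕ → α) (i : ι) (k : Fin n) :
    (B * (rectDiag d : Matrix (Fin m) (Fin n) α)) i k = B.padCols i k * d k := by
  calc (B * (rectDiag d : Matrix (Fin m) (Fin n) α)) i k
      = ∑ l ∈ Finset.range m, if l = k then B.padCols i l * d l else 0 := by
        rw [mul_apply, ← Fin.sum_univ_eq_sum_range]
        refine Finset.sum_congr rfl fun j _ => ?_
        simp [rectDiag, mul_ite]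
    _ = B.padCols i k * d k := by
        rw [Finset.sum_ite_eq']
        split_ifs with hk
        · rfl
        · simp [padCols, Finset.mem_range.not.1 hk]

theorem Matrix.trace_mul_rectDiag_mul_conjTranspose [Fintype ι] [CommSemiring α] [StarRing α]
    (B : Matrix ι (Fin m) α) (C : Matrix ι (Fin n) α) (d : ℕ → α) :
    (B * (rectDiag d : Matrix (Fin m) (Fin n) α) * Cᴴ).trace
      = ∑ l ∈ Finset.range n, d l * ∑ i, B.padCols i l * star (C.padCols i l) := by
  simp only [trace, diag_apply, mul_apply, conjTranspose_apply]
  simp only [← mul_apply, mul_rectDiag_apply]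
  rw [← Fin.sum_univ_eq_sum_range, Finset.sum_comm]
  simp only [padCols_apply_fin, Finset.mul_sum]
  exact Finset.sum_congr rfl fun k _ => Finset.sum_congr rfl fun i _ => by ring

end RectDiag

theorem norm_sum_mul_star_le {𝕜 ι : Type*} [RCLike 𝕜] [Fintype ι] (a b : ι → 𝕜) :
    ‖∑ i, a i * star (b i)‖ ≤ (∑ i, ‖a i‖ ^ 2 + ∑ i, ‖b i‖ ^ 2) / 2 := by
  calc ‖∑ i, a i * star (b i)‖ ≤ ∑ i, ‖a i * star (b i)‖ := norm_sum_le _ _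
    _ ≤ ∑ i, (‖a i‖ ^ 2 + ‖b i‖ ^ 2) / 2 := Finset.sum_le_sum fun i _ => by
        rw [norm_mul, norm_star]
        linarith [two_mul_le_add_sq ‖a i‖ ‖b i‖]
    _ = (∑ i, ‖a i‖ ^ 2 + ∑ i, ‖b i‖ ^ 2) / 2 := by rw [← Finset.sum_div, Finset.sum_add_distrib]

section PaddedColumns

open Finset

variable {𝕜 ι : Type*} [RCLike 𝕜] [Fintype ι] [DecidableEq ι] {m : ℕ} {B : Matrix ι (Fin m) 𝕜}

theorem Matrix.sum_norm_sq_padCols_le_one (hB : B * Bᴴ = 1) (l : ℕ) :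
    ∑ i, ‖B.padCols i l‖ ^ 2 ≤ 1 := by
  by_cases hl : l < m
  · simpa [padCols, hl] using sum_norm_sq_col_le_one hB ⟨l, hl⟩
  · simp [padCols, hl]

theorem Matrix.sum_range_sum_norm_sq_padCols_le_card (hB : B * Bᴴ = 1) (K : ℕ) :
    ∑ l ∈ range K, ∑ i, ‖B.padCols i l‖ ^ 2 ≤ Fintype.card ι := by
  calc ∑ l ∈ range K, ∑ i, ‖B.padCols i l‖ ^ 2
      ≤ ∑ l ∈ range (max K m), ∑ i, ‖B.padCols i l‖ ^ 2 :=
        sum_le_sum_of_subset_of_nonneg (range_subset_range.2 (le_max_left K m))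
          fun _ _ _ => by positivity
    _ = ∑ l ∈ range m, ∑ i, ‖B.padCols i l‖ ^ 2 := by
        rw [← sum_range_add_sum_Ico _ (le_max_right K m), add_eq_left]
        refine sum_eq_zero fun l hl => ?_
        simp [padCols, not_lt.2 (mem_Ico.1 hl).1]
    _ = Fintype.card ι := by
        simpa [← Fin.sum_univ_eq_sum_range] using sum_sum_norm_sq_eq_card_s13 hB

theorem Matrix.norm_trace_mul_rectDiag_mul_conjTranspose_le {n : ℕ} {σ : ℕ → ℝ}
    (hσ : Antitone σ) (hσ0 : ∀ k, 0 ≤ σ k) {C : Matrix ι (Fin n) 𝕜} (hB : B * Bᴴ = 1)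
    (hC : C * Cᴴ = 1) (hn : Fintype.card ι ≤ n) :
    ‖(B * (rectDiag (fun k => (σ k : 𝕜)) : Matrix (Fin m) (Fin n) 𝕜) * Cᴴ).trace‖
      ≤ ∑ l ∈ range (Fintype.card ι), σ l := by
  set wB := fun l => ∑ i, ‖B.padCols i l‖ ^ 2
  set wC := fun l => ∑ i, ‖C.padCols i l‖ ^ 2
  have hweights (w : ℕ → ℝ) (hw0 : ∀ l, 0 ≤ w l) (hw1 : ∀ l, w l ≤ 1)
      (hw : ∑ l ∈ range n, w l ≤ Fintype.card ι) :
      ∑ l ∈ range n, σ l * w l ≤ ∑ l ∈ range (Fintype.card ι), σ l :=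
    hσ.sum_range_mul_le_sum_range hσ0 hn hw0 hw1 hw
  rw [trace_mul_rectDiag_mul_conjTranspose]
  calc _ ≤ ∑ l ∈ range n, σ l * ((wB l + wC l) / 2) := by
        refine (norm_sum_le _ _).trans (sum_le_sum fun l _ => ?_)
        rw [norm_mul, RCLike.norm_ofReal, abs_of_nonneg (hσ0 l)]
        exact mul_le_mul_of_nonneg_left (norm_sum_mul_star_le _ _) (hσ0 l)
    _ = (∑ l ∈ range n, σ l * wB l + ∑ l ∈ range n, σ l * wC l) / 2 := by
        rw [← sum_add_distrib, sum_div]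
        exact sum_congr rfl fun l _ => by ring
    _ ≤ (∑ l ∈ range (Fintype.card ι), σ l + ∑ l ∈ range (Fintype.card ι), σ l) / 2 := by
        gcongr
        · exact hweights wB (fun l => by positivity) (sum_norm_sq_padCols_le_one hB)
            (sum_range_sum_norm_sq_padCols_le_card hB n)
        · exact hweights wC (fun l => by positivity) (sum_norm_sq_padCols_le_one hC)
            (sum_range_sum_norm_sq_padCols_le_card hC n)
    _ = ∑ l ∈ range (Fintype.card ι), σ l := by ring

end PaddedColumns

section Submatrix

variable {α l n o l' o' : Type*} [Fintype n] [Semiring α] [StarRing α]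

theorem Matrix.submatrix_id_mul_conjTranspose_submatrix_id (X : Matrix l n α) (Y : Matrix o n α)
    (f : l' → l) (g : o' → o) :
    X.submatrix f id * (Y.submatrix g id)ᴴ = (X * Yᴴ).submatrix f g := by
  rw [conjTranspose_submatrix, submatrix_mul _ _ f id g Function.bijective_id]

theorem Matrix.submatrix_id_mul_mul_conjTranspose_submatrix_id {k : Type*} [Fintype k]
    (X : Matrix l k α) (A : Matrix k n α) (Y : Matrix o n α) (f : l' → l) (g : o' → o) :
    X.submatrix f id * A * (Y.submatrix g id)ᴴ = (X * A * Yᴴ).submatrix f g := by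
  rw [← submatrix_id_mul_conjTranspose_submatrix_id,
    submatrix_mul _ _ f id id Function.bijective_id, submatrix_id_id]

theorem Matrix.submatrix_id_mul_conjTranspose_self_eq_one [DecidableEq l] [DecidableEq l']
    {X : Matrix l n α} (hX : X * Xᴴ = 1) {f : l' → l} (hf : Function.Injective f) :
    X.submatrix f id * (X.submatrix f id)ᴴ = 1 := by
  rw [submatrix_id_mul_conjTranspose_submatrix_id, hX, submatrix_one _ hf]

theorem Matrix.mul_mul_conjTranspose_eq_one [Fintype o] [DecidableEq l] [DecidableEq n]
    {P : Matrix l n α} {U : Matrix n o α} (hP : P * Pᴴ = 1) (hU : U * Uᴴ = 1) :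
    P * U * (P * U)ᴴ = 1 := by
  rw [conjTranspose_mul, Matrix.mul_assoc, ← Matrix.mul_assoc U, hU, Matrix.one_mul, hP]

end Submatrix

theorem Matrix.trace_submatrix_castLE_rectDiag {α : Type*} [AddCommMonoid α] {r m n : ℕ}
    (d : ℕ → α) (hm : r ≤ m) (hn : r ≤ n) :
    ((rectDiag d : Matrix (Fin m) (Fin n) α).submatrix (Fin.castLE hm) (Fin.castLE hn)).trace
      = ∑ l ∈ Finset.range r, d l := by
  simp [trace, rectDiag, ← Fin.sum_univ_eq_sum_range]

theorem truncated_nuclear_norm_eq {m n r : ℕ}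
    (A : Matrix (Fin m) (Fin n) ℂ)
    (U : Matrix (Fin m) (Fin m) ℂ) (V : Matrix (Fin n) (Fin n) ℂ) (σ : ℕ → ℝ)
    (hU : Uᴴ * U = 1 ∧ U * Uᴴ = 1)
    (hV : Vᴴ * V = 1 ∧ V * Vᴴ = 1)
    (hσ0 : ∀ k, 0 ≤ σ k) (hσa : Antitone σ)
    (hA : A = U * Matrix.of (fun (i : Fin m) (j : Fin n) =>
      if (i : ℕ) = (j : ℕ) then (σ (i : ℕ) : ℂ) else 0) * Vᴴ)
    (hr : r ≤ min m n) :
    ∃ M : ℝ,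
      IsGreatest
        {t : ℝ | ∃ (P : Matrix (Fin r) (Fin m) ℂ) (Q : Matrix (Fin r) (Fin n) ℂ),
          P * Pᴴ = 1 ∧ Q * Qᴴ = 1 ∧ t = ‖(P * A * Qᴴ).trace‖} M ∧
      ∑ i ∈ Finset.Ico r (min m n), σ i = (∑ i ∈ Finset.range (min m n), σ i) - M := by
  set D : Matrix (Fin m) (Fin n) ℂ := rectDiag fun k => (σ k : ℂ)
  replace hA : A = U * D * Vᴴ := hA
  have hrm : r ≤ m := hr.trans (min_le_left m n)
  have hrn : r ≤ n := hr.trans (min_le_right m n)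
  refine ⟨∑ l ∈ Finset.range r, σ l, ⟨?_, ?_⟩, Finset.sum_Ico_eq_sub σ hr⟩
  · -- The first `r` left and right singular vectors attain the bound.
    have hUAV : Uᴴ * A * V = D := by
      rw [hA, ← Matrix.mul_assoc, ← Matrix.mul_assoc, hU.1, Matrix.one_mul, Matrix.mul_assoc,
        hV.1, Matrix.mul_one]
    refine ⟨Uᴴ.submatrix (Fin.castLE hrm) id, Vᴴ.submatrix (Fin.castLE hrn) id,
      submatrix_id_mul_conjTranspose_self_eq_one (by rw [conjTranspose_conjTranspose, hU.1])
        (Fin.castLE_injective hrm),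
      submatrix_id_mul_conjTranspose_self_eq_one (by rw [conjTranspose_conjTranspose, hV.1])
        (Fin.castLE_injective hrn), ?_⟩
    rw [submatrix_id_mul_mul_conjTranspose_submatrix_id, conjTranspose_conjTranspose, hUAV,
      trace_submatrix_castLE_rectDiag, ← Complex.ofReal_sum, Complex.norm_real,
      Real.norm_of_nonneg (Finset.sum_nonneg fun l _ => hσ0 l)]
  · rintro _ ⟨P, Q, hP, hQ, rfl⟩
    have hPAQ : P * A * Qᴴ = P * U * D * (Q * V)ᴴ := by
      simp only [hA, conjTranspose_mul, Matrix.mul_assoc]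
    simpa [hPAQ] using norm_trace_mul_rectDiag_mul_conjTranspose_le hσa hσ0
      (mul_mul_conjTranspose_eq_one hP hU.2) (mul_mul_conjTranspose_eq_one hQ hV.2)
      (by simpa using hrn)
end
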